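/- If a closed chain of at least 4 robots on the grid contains no two consecutive robots at the same position and no two consecutive 90° turns in the same direction (i.e., it is 'mergeless'), then the chain contains at least three consecutive collinear robots. -/
import Mathlib


/-- L¹ norm on ℤ². -/
def l1 (v : ℤ × ℤ) : ℤ := |v.1| + |v.2|

/-- Cross product (determinant) of two vectors in ℤ². -/
def cross (u v : ℤ × ℤ) : ℤ := u.1 * v.2 - u.2 * v.1

lemma unit_cases (u : ℤ × ℤ) (h : l1 u = 1) :
    u = (1,0) ∨ u = (-1,0) ∨ u = (0,1) ∨ u = (0,-1) := by
  obtain ⟨a,b⟩ := u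
  simp only [l1, Prod.mk.injEq]
  simp only [l1] at h
  rcases abs_cases a with ⟨h1,_⟩|⟨h1,_⟩ <;> rcases abs_cases b with ⟨h2,_⟩|⟨h2,_⟩ <;> omega

lemma cross_ne (u v : ℤ × ℤ) (hu : l1 u = 1) (hv : l1 v = 1)
    (h1 : v ≠ u) (h2 : v + u ≠ 0) : cross u v ≠ 0 := by
  rcases unit_cases u hu with rfl|rfl|rfl|rfl <;>
    rcases unit_cases v hv with rfl|rfl|rfl|rfl <;>
    simp_all [cross, Prod.ext_iff] <;> omega

lemma step2 (u v w : ℤ × ℤ) (hu : l1 u = 1) (hv : l1 v = 1) (hw : l1 w = 1)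
    (hc : cross u v ≠ 0) (hc2 : cross v w ≠ 0)
    (hLL : ¬(0 < cross u v ∧ 0 < cross v w))
    (hRR : ¬(cross u v < 0 ∧ cross v w < 0)) : w = u := by
  rcases unit_cases u hu with rfl|rfl|rfl|rfl <;>
    rcases unit_cases v hv with rfl|rfl|rfl|rfl <;>
    rcases unit_cases w hw with rfl|rfl|rfl|rfl <;>
    simp_all [cross, Prod.ext_iff] <;> omega

/-- If a closed chain of at least 4 robots on the grid has unit steps, no backtracking
(`p (i+1) ≠ p (i-1)`), and no two consecutive 90° turns in the same direction
(mergeless), then it contains three consecutive collinear robots. -/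
theorem mergeless_has_three_collinear
    (n : ℕ) [NeZero n] (hn : 4 ≤ n) (p : ZMod n → ℤ × ℤ)
    (hstep : ∀ i, l1 (p (i + 1) - p i) = 1)
    (hnoback : ∀ i, p (i + 1) ≠ p (i - 1))
    (hnoLL : ∀ i, ¬ (0 < cross (p i - p (i - 1)) (p (i + 1) - p i) ∧
        0 < cross (p (i + 1) - p i) (p (i + 2) - p (i + 1))))
    (hnoRR : ∀ i, ¬ (cross (p i - p (i - 1)) (p (i + 1) - p i) < 0 ∧
        cross (p (i + 1) - p i) (p (i + 2) - p (i + 1)) < 0)) :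
    ∃ i, p (i + 1) - p i = p i - p (i - 1) := by
  by_contra hcon
  push_neg at hcon
  set d : ZMod n → ℤ × ℤ := fun i => p (i+1) - p i with hd
  have hsub : ∀ i : ZMod n, i - 1 + 1 = i := fun i => sub_add_cancel i 1
  have hne : ∀ i, d i ≠ d (i-1) := by
    intro i
    have := hcon i
    simp only [hd, hsub]
    exact this
  have hadd : ∀ i, d i + d (i-1) ≠ 0 := by
    intro i h
    apply hnoback i
    have : p (i+1) - p (i-1) = 0 := by
      rw [← h]; simp only [hd, hsub]; ring
    exact sub_eq_zero.mp this
  have hperp : ∀ i, cross (d (i-1)) (d i) ≠ 0 := by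
    intro i
    exact cross_ne _ _ (hstep _) (hstep _) (hne i) (hadd i)
  have hC : ∀ i, cross (p i - p (i-1)) (p (i+1) - p i) = cross (d (i-1)) (d i) := by
    intro i; simp only [hd, hsub]
  have hper : ∀ i, d (i+2) = d i := by
    intro i
    have h1 : cross (d i) (d (i+1)) ≠ 0 := by
      have := hperp (i+1); simpa using this
    have h2 : cross (d (i+1)) (d (i+2)) ≠ 0 := by
      have := hperp (i+2); simpa [show i+2-1 = i+1 by ring] using this
    have hLL := hnoLL (i+1)
    have hRR := hnoRR (i+1)
    rw [hC (i+1)] at hLL hRR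
    simp only [show i+1-1 = i by ring, show i+1+1 = i+2 by ring,
      show i+1+2 = i+3 by ring] at hLL hRR
    have hLL' : ¬(0 < cross (d i) (d (i+1)) ∧ 0 < cross (d (i+1)) (d (i+2))) := by
      convert hLL using 3 <;> simp [hd] <;> congr 1 <;> ring
    have hRR' : ¬(cross (d i) (d (i+1)) < 0 ∧ cross (d (i+1)) (d (i+2)) < 0) := by
      convert hRR using 3 <;> simp [hd] <;> congr 1 <;> ring
    exact step2 _ _ _ (hstep _) (hstep _) (hstep _) h1 h2 hLL' hRR'
  -- natural-number periodicity
  have hperk : ∀ (k : ℕ) (i : ZMod n), d (i + 2*(k:ZMod n)) = d i := by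
    intro k
    induction k with
    | zero => intro i; simp
    | succ k ih =>
      intro i
      have : i + 2*((k+1 : ℕ):ZMod n) = (i + 2) + 2*(k:ZMod n) := by push_cast; ring
      rw [this, ih (i+2), hper]
  rcases Nat.even_or_odd n with he | ho
  · -- even case
    obtain ⟨m, hm⟩ := he
    have hm2 : 2 ≤ m := by omega
    have dd2 : ∀ k : ℕ, d ((2*k : ℕ) : ZMod n) = d 0 ∧ d ((2*k+1 : ℕ) : ZMod n) = d 1 := by
      intro k
      constructor
      · have := hperk k 0; push_cast at this ⊢; simpa [mul_comm] using this
      · have := hperk k 1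
        have e : (1:ZMod n) + 2*(k:ZMod n) = ((2*k+1 : ℕ) : ZMod n) := by push_cast; ring
        rw [e] at this; exact this
    have htel : ∀ k : ℕ, ∑ j ∈ Finset.range k, d ((j:ℕ) : ZMod n) = p ((k:ℕ) : ZMod n) - p 0 := by
      intro k
      induction k with
      | zero => simp
      | succ k ih =>
        rw [Finset.sum_range_succ, ih]
        simp only [hd]
        push_cast
        ring
    have hsum2 : ∀ k : ℕ, ∑ j ∈ Finset.range (2*k), d ((j:ℕ) : ZMod n)
        = (k : ℤ) • (d 0 + d 1) := by
      intro k
      induction k with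
      | zero => simp
      | succ k ih =>
        have : 2*(k+1) = (2*k) + 1 + 1 := by ring
        rw [this, Finset.sum_range_succ, Finset.sum_range_succ, ih,
          (dd2 k).1, (dd2 k).2]
        push_cast
        module
    have h0 : ((m : ℤ)) • (d 0 + d 1) = 0 := by
      rw [← hsum2 m, show 2*m = n by omega, htel n, ZMod.natCast_self, sub_self]
    have hm0 : (m : ℤ) ≠ 0 := by positivity
    have : d 0 + d 1 = 0 := by
      rcases smul_eq_zero.mp h0 with h | h
      · exact absurd h hm0
      · exact h
    have := hadd 1
    simp only [sub_self] at this
    rw [add_comm] at this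
    exact this ‹d 0 + d 1 = 0›
  · -- odd case
    obtain ⟨m, hm⟩ := ho
    have : d (0 + 2*(((m+1 : ℕ)) : ZMod n)) = d 0 := hperk (m+1) 0
    have key : d (1 : ZMod n) = d 0 := by
      rw [← this]
      congr 1
      have : (2 * ((m+1:ℕ) : ZMod n)) = ((2*(m+1) : ℕ) : ZMod n) := by push_cast; ring
      rw [zero_add, this, show 2*(m+1) = n+1 by omega]
      push_cast
      rw [ZMod.natCast_self]
      ring
    have := hne 1
    simp only [sub_self] at this
    exact this key
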